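/- Under the factor model, for every t ≥ 0 and every r ∈ ℝ^d the score of the time-t marginal admits the rearranged representation ∇ log p_t(r) = α_t Λ_t⁻¹ β · ξ(βᵀ Λ_t⁻¹ r, t) − Λ_t⁻¹ r, where ξ(z,t) is the posterior-mean-type function defined below. -/

import Mathlib

/-!
Differentiating under the integral sign, with the first moment of the mixing density as
dominating function, gives Tweedie's formula `∇ log p(x) = S⁻¹ (E[m | x] - x)` for every Gaussian
location mixture `p(x) = ∫ φ(x; m ω, S) ρ ω dμ`, where `E[m | x]` is the mean of `m` under the
weights `φ(x; m ω, S) ρ ω`. In the factor model `m f = α_t β f`, so `E[m | r] = α_t β E[f | r]`.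
Completing the square shows that `φ(Γ_t z; α_t f, Γ_t) / φ(r; α_t β f, Λ_t)` does not depend on `f`
when `z = βᵀ Λ_t⁻¹ r`, hence `E[f | r] = ξ(z, t)`.
-/

open MeasureTheory Matrix

noncomputable section

/-- Euclidean (ℓ²) norm on `Fin n → ℝ`. -/
def eucNorm {n : ℕ} (x : Fin n → ℝ) : ℝ := Real.sqrt (∑ i, x i ^ 2)

/-- The `n`-dimensional Gaussian density `φ(x; μ, S)`. -/
def gaussD (n : ℕ) (x μ : Fin n → ℝ) (S : Matrix (Fin n) (Fin n) ℝ) : ℝ :=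
  (2 * Real.pi) ^ (-(n : ℝ) / 2) * S.det ^ (-(1 : ℝ) / 2) *
    Real.exp (-((x - μ) ⬝ᵥ (S⁻¹ *ᵥ (x - μ))) / 2)

/-- Gradient as the vector of partial derivatives. -/
def gradv {n : ℕ} (f : (Fin n → ℝ) → ℝ) (x : Fin n → ℝ) : Fin n → ℝ :=
  fun i => fderiv ℝ f x (Pi.single i 1)

/-- `α_t = e^{-t/2}`. -/
def af (t : ℝ) : ℝ := Real.exp (-t / 2)

/-- `h_t = 1 - α_t²`. -/
def hf (t : ℝ) : ℝ := 1 - af t ^ 2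

/-- `Λ_t = diag(h_t + σ_i² α_t²)`. -/
def Lam {d : ℕ} (σ : Fin d → ℝ) (t : ℝ) : Matrix (Fin d) (Fin d) ℝ :=
  Matrix.diagonal fun i => hf t + σ i ^ 2 * af t ^ 2

/-- `Λ_t^{-1/2}`. -/
def LamInvSqrt {d : ℕ} (σ : Fin d → ℝ) (t : ℝ) : Matrix (Fin d) (Fin d) ℝ :=
  Matrix.diagonal fun i => (Real.sqrt (hf t + σ i ^ 2 * af t ^ 2))⁻¹

/-- `Γ_t = (βᵀ Λ_t⁻¹ β)⁻¹`. -/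
def Gam {d k : ℕ} (β : Matrix (Fin d) (Fin k) ℝ) (σ : Fin d → ℝ) (t : ℝ) :
    Matrix (Fin k) (Fin k) ℝ :=
  (βᵀ * (Lam σ t)⁻¹ * β)⁻¹

/-- `T_t = Λ_t^{-1/2} β Γ_t βᵀ Λ_t^{-1/2}`. -/
def Tproj {d k : ℕ} (β : Matrix (Fin d) (Fin k) ℝ) (σ : Fin d → ℝ) (t : ℝ) :
    Matrix (Fin d) (Fin d) ℝ :=
  LamInvSqrt σ t * β * Gam β σ t * βᵀ * LamInvSqrt σ t

/-- Time-`t` marginal density `p_t`. -/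
def pT {d k : ℕ} (β : Matrix (Fin d) (Fin k) ℝ) (σ : Fin d → ℝ)
    (pfac : (Fin k → ℝ) → ℝ) (t : ℝ) (r : Fin d → ℝ) : ℝ :=
  ∫ f : Fin k → ℝ, gaussD d r (af t • (β *ᵥ f)) (Lam σ t) * pfac f

/-- Smoothed factor density `p_t^fac`. -/
def pTfac {d k : ℕ} (β : Matrix (Fin d) (Fin k) ℝ) (σ : Fin d → ℝ)
    (pfac : (Fin k → ℝ) → ℝ) (t : ℝ) (y : Fin k → ℝ) : ℝ :=
  ∫ f : Fin k → ℝ, gaussD k y (af t • f) (Gam β σ t) * pfac f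

/-- The posterior-mean-type function `ξ(z, t)`. -/
def xiFun {d k : ℕ} (β : Matrix (Fin d) (Fin k) ℝ) (σ : Fin d → ℝ)
    (pfac : (Fin k → ℝ) → ℝ) (t : ℝ) (z : Fin k → ℝ) : Fin k → ℝ :=
  (∫ f : Fin k → ℝ, gaussD k (Gam β σ t *ᵥ z) (af t • f) (Gam β σ t) * pfac f)⁻¹ •
    ∫ f : Fin k → ℝ, (gaussD k (Gam β σ t *ᵥ z) (af t • f) (Gam β σ t) * pfac f) • f

namespace Matrix

variable {n : ℕ}

def dotMulVecCLM (Q : Matrix (Fin n) (Fin n) ℝ) :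
    (Fin n → ℝ) →L[ℝ] (Fin n → ℝ) →L[ℝ] ℝ :=
  LinearMap.toContinuousLinearMap
    (LinearMap.toContinuousLinearMap.toLinearMap ∘ₗ dotProductBilin ℝ ℝ ∘ₗ Matrix.toLin' Q)

@[simp]
theorem dotMulVecCLM_apply (Q : Matrix (Fin n) (Fin n) ℝ) (v w : Fin n → ℝ) :
    dotMulVecCLM Q v w = (Q *ᵥ v) ⬝ᵥ w := rfl

end Matrix

theorem gradv_eq_of_hasFDerivAt {n : ℕ} {f : (Fin n → ℝ) → ℝ} {x : Fin n → ℝ}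
    {Q : Matrix (Fin n) (Fin n) ℝ} {v : Fin n → ℝ} (hf : HasFDerivAt f (dotMulVecCLM Q v) x) :
    gradv f x = Q *ᵥ v := by
  ext i
  simp [gradv, hf.fderiv]

theorem dotProduct_mulVec_sub_mulVec {n k : ℕ} {Q : Matrix (Fin n) (Fin n) ℝ} (hQ : Q.IsSymm)
    (B : Matrix (Fin n) (Fin k) ℝ) (x : Fin n → ℝ) (g : Fin k → ℝ) :
    (x - B *ᵥ g) ⬝ᵥ (Q *ᵥ (x - B *ᵥ g)) =
      x ⬝ᵥ (Q *ᵥ x) - 2 * (g ⬝ᵥ (Bᵀ *ᵥ (Q *ᵥ x))) + g ⬝ᵥ ((Bᵀ * Q * B) *ᵥ g) := by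
  have hcross : g ⬝ᵥ (Bᵀ *ᵥ (Q *ᵥ x)) = (B *ᵥ g) ⬝ᵥ (Q *ᵥ x) := by
    rw [dotProduct_transpose_mulVec, dotProduct_comm]
  have hsymm : x ⬝ᵥ (Q *ᵥ (B *ᵥ g)) = (B *ᵥ g) ⬝ᵥ (Q *ᵥ x) := by
    rw [← dotProduct_transpose_mulVec, hQ.eq]
  have hquad : g ⬝ᵥ ((Bᵀ * Q * B) *ᵥ g) = (B *ᵥ g) ⬝ᵥ (Q *ᵥ (B *ᵥ g)) := by
    rw [← mulVec_mulVec, ← mulVec_mulVec, dotProduct_transpose_mulVec, dotProduct_comm]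
  rw [hcross, hquad, mulVec_sub, sub_dotProduct, dotProduct_sub, dotProduct_sub, hsymm]
  ring

section Gaussian

variable {n : ℕ} {S : Matrix (Fin n) (Fin n) ℝ}

theorem gaussD_eq_mul_exp (x μ : Fin n → ℝ) :
    gaussD n x μ S = gaussD n 0 0 S * Real.exp (-((x - μ) ⬝ᵥ (S⁻¹ *ᵥ (x - μ))) / 2) := by
  simp [gaussD]

theorem gaussD_pos (hS : S.PosDef) (x μ : Fin n → ℝ) : 0 < gaussD n x μ S := by
  have := hS.det_pos
  unfold gaussD
  positivity

theorem gaussD_le_gaussD_zero (hS : S.PosDef) (x μ : Fin n → ℝ) :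
    gaussD n x μ S ≤ gaussD n 0 0 S := by
  have hq : 0 ≤ (x - μ) ⬝ᵥ (S⁻¹ *ᵥ (x - μ)) := by
    simpa using hS.inv.posSemidef.dotProduct_mulVec_nonneg (x - μ)
  rw [gaussD_eq_mul_exp]
  exact mul_le_of_le_one_right (gaussD_pos hS 0 0).le (Real.exp_le_one_iff.mpr (by linarith))

theorem norm_gaussD_mul_le (hS : S.PosDef) (x μ : Fin n → ℝ) {r : ℝ} (hr : 0 ≤ r) :
    ‖gaussD n x μ S * r‖ ≤ gaussD n 0 0 S * r := by
  rw [norm_mul, Real.norm_of_nonneg (gaussD_pos hS _ _).le, Real.norm_of_nonneg hr]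
  exact mul_le_mul_of_nonneg_right (gaussD_le_gaussD_zero hS _ _) hr

theorem continuous_gaussD_mean (x : Fin n → ℝ) : Continuous fun μ => gaussD n x μ S := by
  unfold gaussD
  fun_prop

theorem hasFDerivAt_gaussD (hS : S.IsSymm) (x μ : Fin n → ℝ) :
    HasFDerivAt (fun y => gaussD n y μ S) (gaussD n x μ S • dotMulVecCLM S⁻¹ (μ - x)) x := by
  have hq := (dotMulVecCLM S⁻¹).hasFDerivAt_of_bilinear
    (hasFDerivAt_sub_const (x := x) μ) (hasFDerivAt_sub_const (x := x) μ)
  have hfun : (fun y => gaussD n y μ S) = fun y =>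
      gaussD n 0 0 S * Real.exp ((-1 / 2 : ℝ) * dotMulVecCLM S⁻¹ (y - μ) (y - μ)) := by
    ext y
    rw [gaussD_eq_mul_exp, dotMulVecCLM_apply, dotProduct_comm]
    ring_nf
  rw [hfun]
  refine ((hq.const_mul (-1 / 2 : ℝ)).exp.const_mul (gaussD n 0 0 S)).congr_fderiv ?_
  rw [gaussD_eq_mul_exp x μ, ← neg_sub x μ]
  ext v
  have hsymm : (S⁻¹ *ᵥ v) ⬝ᵥ (x - μ) = (S⁻¹ *ᵥ (x - μ)) ⬝ᵥ v := by
    rw [dotProduct_comm, ← dotProduct_transpose_mulVec, hS.inv.eq, dotProduct_comm]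
  simp only [_root_.smul_apply, _root_.add_apply, ContinuousLinearMap.precompR_apply,
    ContinuousLinearMap.precompL_apply, ContinuousLinearMap.compL_apply,
    ContinuousLinearMap.comp_id, dotMulVecCLM_apply, smul_eq_mul, hsymm, mulVec_neg,
    neg_dotProduct, ContinuousLinearMap.id_apply]
  rw [dotProduct_comm (x - μ)]
  ring_nf

theorem norm_gaussD_mul_smul_le (hS : S.PosDef) (x μ : Fin n → ℝ) {r : ℝ} (hr : 0 ≤ r) :
    ‖(gaussD n x μ S * r) • dotMulVecCLM S⁻¹ (μ - x)‖ ≤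
      gaussD n 0 0 S * ‖dotMulVecCLM S⁻¹‖ * ((‖μ‖ + ‖x‖) * r) := by
  have hK : ‖dotMulVecCLM S⁻¹ (μ - x)‖ ≤ ‖dotMulVecCLM S⁻¹‖ * (‖μ‖ + ‖x‖) :=
    ((dotMulVecCLM S⁻¹).le_opNorm _).trans (by gcongr; exact norm_sub_le _ _)
  rw [norm_smul]
  calc ‖gaussD n x μ S * r‖ * ‖dotMulVecCLM S⁻¹ (μ - x)‖
      ≤ gaussD n 0 0 S * r * (‖dotMulVecCLM S⁻¹‖ * (‖μ‖ + ‖x‖)) :=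
        mul_le_mul (norm_gaussD_mul_le hS x μ hr) hK (norm_nonneg _)
          (mul_nonneg (gaussD_pos hS 0 0).le hr)
    _ = _ := by ring

theorem exists_pos_gaussD_reduced_eq_mul {k : ℕ} {B : Matrix (Fin n) (Fin k) ℝ}
    (hS : S.PosDef) (hG : (Bᵀ * S⁻¹ * B).PosDef) (x : Fin n → ℝ) :
    ∃ c, 0 < c ∧ ∀ g, gaussD k ((Bᵀ * S⁻¹ * B)⁻¹ *ᵥ (Bᵀ *ᵥ (S⁻¹ *ᵥ x))) g (Bᵀ * S⁻¹ * B)⁻¹ =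
      c * gaussD n x (B *ᵥ g) S := by
  set G := Bᵀ * S⁻¹ * B
  set z := Bᵀ *ᵥ (S⁻¹ *ᵥ x)
  have hdet : IsUnit G.det := hG.det_pos.ne'.isUnit
  have hQ : S⁻¹.IsSymm := (isHermitian_iff_isSymm.mp hS.isHermitian).inv
  have hG' : G.IsSymm := isHermitian_iff_isSymm.mp hG.isHermitian
  set δ := (G⁻¹ *ᵥ z) ⬝ᵥ z - x ⬝ᵥ (S⁻¹ *ᵥ x)
  -- Both exponents equal `-2 g ⬝ᵥ z + g ⬝ᵥ (G *ᵥ g)` up to a constant.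
  have hquad : ∀ g, (G⁻¹ *ᵥ z - g) ⬝ᵥ (G⁻¹⁻¹ *ᵥ (G⁻¹ *ᵥ z - g)) =
      (x - B *ᵥ g) ⬝ᵥ (S⁻¹ *ᵥ (x - B *ᵥ g)) + δ := by
    intro g
    have h := dotProduct_mulVec_sub_mulVec hG' 1 (G⁻¹ *ᵥ z) g
    simp only [one_mulVec, transpose_one, Matrix.one_mul, Matrix.mul_one, mulVec_mulVec,
      mul_nonsing_inv _ hdet] at h
    rw [nonsing_inv_nonsing_inv _ hdet, h, dotProduct_mulVec_sub_mulVec hQ]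
    ring
  refine ⟨gaussD k 0 0 G⁻¹ * Real.exp (-δ / 2) / gaussD n 0 0 S,
    by have := gaussD_pos hS 0 0; have := gaussD_pos hG.inv 0 0; positivity, fun g => ?_⟩
  have := (gaussD_pos hS 0 0).ne'
  rw [gaussD_eq_mul_exp (G⁻¹ *ᵥ z), gaussD_eq_mul_exp x, hquad g, neg_add, add_div, Real.exp_add]
  field_simp

end Gaussian

section WeightedMean

variable {Ω E F : Type*} [MeasurableSpace Ω] [NormedAddCommGroup E] [NormedSpace ℝ E]
  [NormedAddCommGroup F] [NormedSpace ℝ F] {μ : Measure Ω}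

def weightedMean (μ : Measure Ω) (w : Ω → ℝ) (g : Ω → E) : E :=
  (∫ ω, w ω ∂μ)⁻¹ • ∫ ω, w ω • g ω ∂μ

theorem weightedMean_const_mul {c : ℝ} (hc : c ≠ 0) (w : Ω → ℝ) (g : Ω → E) :
    weightedMean μ (fun ω => c * w ω) g = weightedMean μ w g := by
  have h : ∀ ω, (c * w ω) • g ω = c • (w ω • g ω) := fun ω => mul_smul _ _ _
  rw [weightedMean, weightedMean, integral_const_mul, integral_congr_ae (ae_of_all _ h),
    integral_smul, smul_smul, mul_inv, mul_right_comm, inv_mul_cancel₀ hc, one_mul]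

theorem weightedMean_map [CompleteSpace E] [CompleteSpace F] (L : E →L[ℝ] F) {w : Ω → ℝ} {g : Ω → E}
    (hg : Integrable (fun ω => w ω • g ω) μ) :
    weightedMean μ w (fun ω => L (g ω)) = L (weightedMean μ w g) := by
  simp only [weightedMean, map_smul, ← L.integral_comp_comm hg]

theorem weightedMean_mulVec {k l : ℕ} (M : Matrix (Fin l) (Fin k) ℝ) {w : Ω → ℝ}
    {g : Ω → Fin k → ℝ} (hg : Integrable (fun ω => w ω • g ω) μ) :
    weightedMean μ w (fun ω => M *ᵥ g ω) = M *ᵥ weightedMean μ w g :=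
  weightedMean_map (LinearMap.toContinuousLinearMap (Matrix.toLin' M)) hg

end WeightedMean

section GaussianMixture

variable {Ω : Type*} [MeasurableSpace Ω] {μ : Measure Ω} {n : ℕ} {S : Matrix (Fin n) (Fin n) ℝ}
  {m : Ω → Fin n → ℝ} {ρ : Ω → ℝ}

def gaussMixture (μ : Measure Ω) (S : Matrix (Fin n) (Fin n) ℝ) (m : Ω → Fin n → ℝ)
    (ρ : Ω → ℝ) (x : Fin n → ℝ) : ℝ :=
  ∫ ω, gaussD n x (m ω) S * ρ ω ∂μ

theorem aestronglyMeasurable_gaussD_mean (hm : AEStronglyMeasurable m μ) (x : Fin n → ℝ) :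
    AEStronglyMeasurable (fun ω => gaussD n x (m ω) S) μ :=
  (continuous_gaussD_mean x).comp_aestronglyMeasurable hm

theorem integrable_gaussD_mul (hS : S.PosDef) (hρ : Integrable ρ μ)
    (hm : AEStronglyMeasurable m μ) (x : Fin n → ℝ) :
    Integrable (fun ω => gaussD n x (m ω) S * ρ ω) μ :=
  hρ.bdd_mul (aestronglyMeasurable_gaussD_mean hm x) (ae_of_all _ fun ω => by
    rw [Real.norm_of_nonneg (gaussD_pos hS _ _).le]
    exact gaussD_le_gaussD_zero hS _ _)

theorem integrable_gaussD_mul_smul {E : Type*} [NormedAddCommGroup E] [NormedSpace ℝ E]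
    {g : Ω → E} (hS : S.PosDef) (hρ0 : ∀ ω, 0 ≤ ρ ω) (hρ : AEStronglyMeasurable ρ μ)
    (hm : AEStronglyMeasurable m μ) (hg : AEStronglyMeasurable g μ)
    (hgρ : Integrable (fun ω => ‖g ω‖ * ρ ω) μ) (x : Fin n → ℝ) :
    Integrable (fun ω => (gaussD n x (m ω) S * ρ ω) • g ω) μ := by
  refine (hgρ.const_mul (gaussD n 0 0 S)).mono'
    (((aestronglyMeasurable_gaussD_mean hm x).mul hρ).smul hg) (ae_of_all _ fun ω => ?_)
  rw [norm_smul]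
  calc ‖gaussD n x (m ω) S * ρ ω‖ * ‖g ω‖ ≤ gaussD n 0 0 S * ρ ω * ‖g ω‖ :=
        mul_le_mul_of_nonneg_right (norm_gaussD_mul_le hS x (m ω) (hρ0 ω)) (norm_nonneg _)
    _ = gaussD n 0 0 S * (‖g ω‖ * ρ ω) := by ring

theorem gaussMixture_pos (hS : S.PosDef) (hρ0 : ∀ ω, 0 ≤ ρ ω) (hρpos : 0 < ∫ ω, ρ ω ∂μ)
    (hm : AEStronglyMeasurable m μ) (x : Fin n → ℝ) : 0 < gaussMixture μ S m ρ x := by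
  have hρ := Integrable.of_integral_ne_zero hρpos.ne'
  have hsupp : Function.support (fun ω => gaussD n x (m ω) S * ρ ω) = Function.support ρ := by
    ext ω
    simp [(gaussD_pos hS x (m ω)).ne']
  rw [gaussMixture, integral_pos_iff_support_of_nonneg
    (fun ω => mul_nonneg (gaussD_pos hS _ _).le (hρ0 ω)) (integrable_gaussD_mul hS hρ hm x),
    hsupp, ← integral_pos_iff_support_of_nonneg hρ0 hρ]
  exact hρpos

theorem hasFDerivAt_gaussMixture (hS : S.PosDef) (hρ0 : ∀ ω, 0 ≤ ρ ω) (hρ : Integrable ρ μ)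
    (hm : AEStronglyMeasurable m μ) (hmρ : Integrable (fun ω => ‖m ω‖ * ρ ω) μ)
    (x : Fin n → ℝ) :
    HasFDerivAt (gaussMixture μ S m ρ)
      (dotMulVecCLM S⁻¹ (∫ ω, (gaussD n x (m ω) S * ρ ω) • (m ω - x) ∂μ)) x := by
  set K := dotMulVecCLM S⁻¹
  set bound : Ω → ℝ := fun ω => gaussD n 0 0 S * ‖K‖ * ((‖m ω‖ + (‖x‖ + 1)) * ρ ω)
  have hdiff : ∀ ω y, HasFDerivAt (fun y => gaussD n y (m ω) S * ρ ω)
      ((gaussD n y (m ω) S * ρ ω) • K (m ω - y)) y := fun ω y =>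
    ((hasFDerivAt_gaussD (isHermitian_iff_isSymm.mp hS.isHermitian) y (m ω)).mul_const
      (ρ ω)).congr_fderiv (by rw [smul_smul, mul_comm])
  have hbound : ∀ ω, ∀ y ∈ Metric.ball x 1,
      ‖(gaussD n y (m ω) S * ρ ω) • K (m ω - y)‖ ≤ bound ω := by
    intro ω y hy
    have hy' : ‖y‖ ≤ ‖x‖ + 1 := by
      have := norm_le_norm_add_norm_sub' y x
      rw [← dist_eq_norm] at this
      linarith [Metric.mem_ball.mp hy]
    refine (norm_gaussD_mul_smul_le hS y (m ω) (hρ0 ω)).trans ?_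
    have := (gaussD_pos hS 0 0).le
    have := hρ0 ω
    simp only [bound]
    gcongr
  have hint : Integrable (fun ω => (gaussD n x (m ω) S * ρ ω) • (m ω - x)) μ := by
    simp only [smul_sub]
    exact (integrable_gaussD_mul_smul hS hρ0 hρ.1 hm hm hmρ x).sub
      ((integrable_gaussD_mul hS hρ hm x).smul_const x)
  have hbound_int : Integrable bound μ := by
    refine ((hmρ.add (hρ.const_mul (‖x‖ + 1))).const_mul (gaussD n 0 0 S * ‖K‖)).congr
      (ae_of_all _ fun ω => ?_)
    simp only [bound, Pi.add_apply]
    ring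
  have := hasFDerivAt_integral_of_dominated_of_fderiv_le (Metric.ball_mem_nhds x one_pos)
    (Filter.Eventually.of_forall fun y => (integrable_gaussD_mul hS hρ hm y).1)
    (integrable_gaussD_mul hS hρ hm x)
    ((integrable_gaussD_mul hS hρ hm x).1.smul
      (K.continuous.comp_aestronglyMeasurable (hm.sub aestronglyMeasurable_const)))
    (ae_of_all _ hbound) hbound_int (ae_of_all _ fun ω y _ => hdiff ω y)
  simp only [← map_smul, K.integral_comp_comm hint] at this
  exact this

theorem gradv_log_gaussMixture (hS : S.PosDef) (hρ0 : ∀ ω, 0 ≤ ρ ω) (hρpos : 0 < ∫ ω, ρ ω ∂μ)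
    (hm : AEStronglyMeasurable m μ) (hmρ : Integrable (fun ω => ‖m ω‖ * ρ ω) μ)
    (x : Fin n → ℝ) :
    gradv (fun y => Real.log (gaussMixture μ S m ρ y)) x =
      S⁻¹ *ᵥ (weightedMean μ (fun ω => gaussD n x (m ω) S * ρ ω) m - x) := by
  have hρ := Integrable.of_integral_ne_zero hρpos.ne'
  have hp := (gaussMixture_pos hS hρ0 hρpos hm x).ne'
  have hφ := integrable_gaussD_mul hS hρ hm x
  have hmoment : ∫ ω, (gaussD n x (m ω) S * ρ ω) • (m ω - x) ∂μ =
      gaussMixture μ S m ρ x • (weightedMean μ (fun ω => gaussD n x (m ω) S * ρ ω) m - x) := by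
    rw [gaussMixture] at hp ⊢
    simp only [smul_sub]
    rw [integral_sub (integrable_gaussD_mul_smul hS hρ0 hρ.1 hm hm hmρ x) (hφ.smul_const x),
      integral_smul_const, weightedMean, smul_smul, mul_inv_cancel₀ hp, one_smul]
  refine gradv_eq_of_hasFDerivAt ?_
  have := (hasFDerivAt_gaussMixture hS hρ0 hρ hm hmρ x).log hp
  rwa [hmoment, ← map_smul, smul_smul, inv_mul_cancel₀ hp, one_smul] at this

end GaussianMixture

theorem mulVec_injective_of_mul_eq_one {k n : ℕ} {A : Matrix (Fin k) (Fin n) ℝ}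
    {B : Matrix (Fin n) (Fin k) ℝ} (h : A * B = 1) : Function.Injective B.mulVec :=
  fun x y hxy => by simpa [mulVec_mulVec, h] using congrArg (A *ᵥ ·) hxy

theorem norm_le_eucNorm {n : ℕ} (x : Fin n → ℝ) : ‖x‖ ≤ eucNorm x :=
  (pi_norm_le_iff_of_nonneg (Real.sqrt_nonneg _)).mpr fun i => Real.abs_le_sqrt <|
    Finset.single_le_sum (f := fun j => x j ^ 2) (fun _ _ => sq_nonneg _) (Finset.mem_univ i)

theorem integrable_norm_mul_of_eucNorm_sq {k : ℕ} {μ : Measure (Fin k → ℝ)}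
    {ρ : (Fin k → ℝ) → ℝ} (hρ0 : ∀ f, 0 ≤ ρ f) (hρ : Integrable ρ μ)
    (hmom : Integrable (fun f => eucNorm f ^ 2 * ρ f) μ) :
    Integrable (fun f => ‖f‖ * ρ f) μ := by
  refine (hρ.add hmom).mono' (continuous_norm.aestronglyMeasurable.mul hρ.1)
    (ae_of_all _ fun f => ?_)
  have h : ‖f‖ ≤ 1 + eucNorm f ^ 2 := by nlinarith [norm_le_eucNorm f]
  rw [norm_mul, norm_norm, Real.norm_of_nonneg (hρ0 f), Pi.add_apply]
  nlinarith [hρ0 f]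

theorem integrable_norm_mulVec_mul {k n : ℕ} {μ : Measure (Fin k → ℝ)} {ρ : (Fin k → ℝ) → ℝ}
    (M : Matrix (Fin n) (Fin k) ℝ) (hρ : AEStronglyMeasurable ρ μ)
    (h : Integrable (fun f => ‖f‖ * ρ f) μ) : Integrable (fun f => ‖M *ᵥ f‖ * ρ f) μ := by
  set L := LinearMap.toContinuousLinearMap (Matrix.toLin' M)
  refine (h.norm.const_mul ‖L‖).mono' ((L.continuous.norm.aestronglyMeasurable).mul hρ)
    (ae_of_all _ fun f => ?_)
  rw [norm_mul, norm_norm, norm_mul, norm_norm, ← mul_assoc]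
  exact mul_le_mul_of_nonneg_right (L.le_opNorm f) (norm_nonneg _)

section FactorModel

variable {d k : ℕ} {β : Matrix (Fin d) (Fin k) ℝ} {σ : Fin d → ℝ} {pfac : (Fin k → ℝ) → ℝ}
  {t : ℝ}

theorem posDef_Lam (hσ : ∀ i, 0 < σ i) (ht : 0 ≤ t) : (Lam σ t).PosDef := by
  refine posDef_diagonal_iff.mpr fun i => ?_
  have hα : 0 < af t := Real.exp_pos _
  have hα1 : af t ≤ 1 := Real.exp_le_one_iff.mpr (by linarith)
  have := hσ i
  simp only [hf]
  nlinarith [mul_pos (pow_pos this 2) (pow_pos hα 2)]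

theorem pT_eq_gaussMixture :
    pT β σ pfac t = gaussMixture volume (Lam σ t) (fun f => (af t • β) *ᵥ f) pfac := by
  ext r
  simp [pT, gaussMixture, smul_mulVec]

theorem xiFun_eq_weightedMean (hΛ : (Lam σ t).PosDef) (hG : (βᵀ * (Lam σ t)⁻¹ * β).PosDef)
    (r : Fin d → ℝ) :
    xiFun β σ pfac t (βᵀ *ᵥ ((Lam σ t)⁻¹ *ᵥ r)) =
      weightedMean volume (fun f => gaussD d r ((af t • β) *ᵥ f) (Lam σ t) * pfac f)
        fun f => f := by
  obtain ⟨c, hc, hreduced⟩ := exists_pos_gaussD_reduced_eq_mul hΛ hG r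
  have hweight : ∀ f, gaussD k (Gam β σ t *ᵥ (βᵀ *ᵥ ((Lam σ t)⁻¹ *ᵥ r))) (af t • f) (Gam β σ t) *
      pfac f = c * (gaussD d r ((af t • β) *ᵥ f) (Lam σ t) * pfac f) := fun f => by
    rw [Gam, hreduced, mulVec_smul, ← smul_mulVec, mul_assoc]
  simp only [xiFun, hweight]
  exact weightedMean_const_mul hc.ne' _ _

end FactorModel

theorem score_rearranged_general
    (d k : ℕ)
    (β : Matrix (Fin d) (Fin k) ℝ) (hβ : βᵀ * β = 1)
    (pfac : (Fin k → ℝ) → ℝ)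
    (hpfac_nonneg : ∀ f, 0 ≤ pfac f)
    (hpfac_prob : (∫ f : Fin k → ℝ, pfac f) = 1)
    (hpfac_mom : Integrable (fun f : Fin k → ℝ => eucNorm f ^ 2 * pfac f))
    (σ : Fin d → ℝ)
    (hσpos : ∀ i, 0 < σ i)
    (t : ℝ) (htnn : 0 ≤ t) (r : Fin d → ℝ) :
    gradv (fun r' => Real.log (pT β σ pfac t r')) r =
      af t • (((Lam σ t)⁻¹ * β) *ᵥ xiFun β σ pfac t (βᵀ *ᵥ ((Lam σ t)⁻¹ *ᵥ r)))
        - (Lam σ t)⁻¹ *ᵥ r := by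
  have hΛ := posDef_Lam hσpos htnn
  have hG : (βᵀ * (Lam σ t)⁻¹ * β).PosDef := by
    simpa using hΛ.inv.conjTranspose_mul_mul_same (mulVec_injective_of_mul_eq_one hβ)
  have hpfac_pos : 0 < ∫ f, pfac f := hpfac_prob ▸ one_pos
  have hpfac := Integrable.of_integral_ne_zero hpfac_pos.ne'
  have hmom := integrable_norm_mul_of_eucNorm_sq hpfac_nonneg hpfac hpfac_mom
  have hm : AEStronglyMeasurable (fun f => (af t • β) *ᵥ f) volume :=
    (Continuous.matrix_mulVec continuous_const continuous_id).aestronglyMeasurable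
  have hmean := weightedMean_mulVec (af t • β) (g := fun f => f)
    (integrable_gaussD_mul_smul hΛ hpfac_nonneg hpfac.1 hm aestronglyMeasurable_id hmom r)
  rw [pT_eq_gaussMixture, gradv_log_gaussMixture hΛ hpfac_nonneg hpfac_pos hm
      (integrable_norm_mulVec_mul _ hpfac.1 hmom), hmean, ← xiFun_eq_weightedMean hΛ hG]
  simp [mulVec_sub, mulVec_mulVec, smul_mulVec, mulVec_smul]

/-- rearranged score representation. -/
theorem score_rearranged
    (d k : ℕ) (hk1 : 1 ≤ k) (hkd : k ≤ d)
    (β : Matrix (Fin d) (Fin k) ℝ) (hβ : βᵀ * β = 1)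
    (pfac : (Fin k → ℝ) → ℝ)
    (hpfac_nonneg : ∀ f, 0 ≤ pfac f)
    (hpfac_prob : (∫ f : Fin k → ℝ, pfac f) = 1)
    (hpfac_smooth : ContDiff ℝ 2 pfac)
    (hpfac_mom : Integrable (fun f : Fin k → ℝ => eucNorm f ^ 2 * pfac f))
    (σ : Fin d → ℝ) (σmax : ℝ)
    (hσpos : ∀ i, 0 < σ i)
    (hσdec : ∀ i j : Fin d, i ≤ j → σ j ≤ σ i)
    (hσmax : ∀ i, σ i ≤ σmax)
    (t : ℝ) (htnn : 0 ≤ t) (r : Fin d → ℝ) :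
    gradv (fun r' => Real.log (pT β σ pfac t r')) r =
      af t • (((Lam σ t)⁻¹ * β) *ᵥ xiFun β σ pfac t (βᵀ *ᵥ ((Lam σ t)⁻¹ *ᵥ r)))
        - (Lam σ t)⁻¹ *ᵥ r :=
  score_rearranged_general d k β hβ pfac hpfac_nonneg hpfac_prob hpfac_mom σ hσpos t htnn r
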